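/- Let α be a rational number that is not a nonpositive integer. For integers 0 ≤ k ≤ n set binom(n+α, k+α) = Γ(n+α+1)/(Γ(k+α+1)·(n−k)!) and P_n(α) = Σ_{k=0}^n binom(n+α, k+α)·(−1)^k/(k!·(k+α)). Then for every real z with |z| < 1, the series Σ_{n=0}^∞ P_n(α) z^n converges and equals (1−z)^{−α−1} · Σ_{k=0}^∞ (−z/(1−z))^k / (k!·(k+α)). -/

import Mathlib

/-!
Put `c k = (-1) ^ k / (k! (k + α))`. For `k ≤ n` the Gamma quotient `binom(n+α, k+α)` equals the
coefficient `binom(n+α, n-k)` of `z ^ (n - k)` in `(1 - z) ^ (-(k + α + 1))`. Hence `∑ P_n(α) z ^ n`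
sums the double series `∑_k c k z ^ k (1 - z) ^ (-(k + α + 1))` along antidiagonals, while its rows
sum to `(1 - z) ^ (-α - 1) E_α(-z / (1 - z))`. The double series converges absolutely: with `c k`,
`α`, `z` replaced by their absolute values the binomial coefficients only grow, and the rows then
sum to `(1 - |z|) ^ (-|α| - 1) |c k| t ^ k` with `t = |z| / (1 - |z|)`, summable since
`|c k| ≤ 1 / k!` for large `k`.
-/

open Finset Polynomial

/-- The generalized binomial coefficient `binom(n+α, k+α) = Γ(n+α+1)/(Γ(k+α+1)·(n−k)!)`. -/
noncomputable def genBinom (α : ℚ) (n k : ℕ) : ℝ :=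
  Real.Gamma ((n : ℝ) + (α : ℝ) + 1) /
    (Real.Gamma ((k : ℝ) + (α : ℝ) + 1) * (Nat.factorial (n - k) : ℝ))

/-- `P_n(α) = ∑_{k=0}^n binom(n+α, k+α) (−1)^k/(k!(k+α))`. -/
noncomputable def gammaApprox (α : ℚ) (n : ℕ) : ℝ :=
  ∑ k ∈ Finset.range (n + 1),
    genBinom α n k * (-1 : ℝ) ^ k / ((Nat.factorial k : ℝ) * ((k : ℝ) + (α : ℝ)))

theorem Ring.choose_add_natCast_sub_one_eq_ascPochhammer (b : ℝ) (n : ℕ) :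
    Ring.choose (b + n - 1) n = (ascPochhammer ℝ n).eval b / n.factorial := by
  rw [Ring.choose_eq_smul, descPochhammer_smeval_eq_ascPochhammer, ascPochhammer_smeval_eq_eval,
    smul_eq_mul, inv_mul_eq_div]
  ring_nf

theorem abs_ascPochhammer_eval_le {b B : ℝ} (h : |b| ≤ B) (n : ℕ) :
    |(ascPochhammer ℝ n).eval b| ≤ (ascPochhammer ℝ n).eval B := by
  induction n with
  | zero => simp
  | succ n ih =>
    rw [ascPochhammer_succ_eval, ascPochhammer_succ_eval, abs_mul]
    have hbn : |b + n| ≤ B + n := (abs_add_le _ _).trans (by simpa using h)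
    exact mul_le_mul ih hbn (abs_nonneg _) ((abs_nonneg _).trans ih)

theorem abs_ringChoose_add_natCast_sub_one_le {b B : ℝ} (h : |b| ≤ B) (n : ℕ) :
    |Ring.choose (b + n - 1) n| ≤ Ring.choose (B + n - 1) n := by
  rw [Ring.choose_add_natCast_sub_one_eq_ascPochhammer,
    Ring.choose_add_natCast_sub_one_eq_ascPochhammer, abs_div, Nat.abs_cast]
  gcongr
  exact abs_ascPochhammer_eval_le h n

theorem hasSum_ringChoose_mul_pow (b : ℝ) {x : ℝ} (hx : |x| < 1) :
    HasSum (fun n : ℕ => Ring.choose (b + n - 1) n * x ^ n) ((1 - x) ^ (-b)) := by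
  have hx' : x ∈ Metric.eball (0 : ℝ) 1 := by
    simpa [Metric.mem_eball, edist_zero_right, Real.enorm_eq_ofReal_abs] using hx
  have h1x : 0 ≤ 1 - x := by linarith [le_abs_self x]
  simpa [FormalMultilinearSeries.ofScalars_apply_eq, mul_comm, Real.rpow_neg h1x] using
    (Real.one_div_one_sub_rpow_hasFPowerSeriesOnBall_zero b).hasSum hx'

theorem Real.Gamma_add_natCast_eq_ascPochhammer_mul {x : ℝ} (hx : ∀ m : ℕ, x ≠ -m) (n : ℕ) :
    Real.Gamma (x + n) = (ascPochhammer ℝ n).eval x * Real.Gamma x := by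
  induction n with
  | zero => simp
  | succ n ih =>
    have hxn : x + n ≠ 0 := fun h => hx n (by linarith)
    rw [Nat.cast_succ, ← add_assoc, Real.Gamma_add_one hxn, ih, ascPochhammer_succ_eval]
    ring

theorem Real.pow_mul_rpow_neg_natCast_add {u : ℝ} (hu : 0 < u) (x b : ℝ) (k : ℕ) :
    x ^ k * u ^ (-(k + b)) = u ^ (-b) * (x / u) ^ k := by
  rw [neg_add, Real.rpow_add hu, Real.rpow_neg hu.le (k : ℝ), Real.rpow_natCast, div_pow]
  ring

theorem HasSum.sum_antidiagonal {α : Type*} [AddCommMonoid α] [TopologicalSpace α]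
    [ContinuousAdd α] [RegularSpace α] {f : ℕ × ℕ → α} {s : α} (hf : HasSum f s) :
    HasSum (fun n => ∑ p ∈ antidiagonal n, f p) s :=
  (HasAntidiagonal.sigmaAntidiagonalEquivProd.hasSum_iff.2 hf).sigma fun _ =>
    (Finset.sum_finset_coe (fun p => f p) _) ▸ hasSum_fintype _

section EulerTransform

noncomputable def eulerTerm (c : ℕ → ℝ) (a z : ℝ) (p : ℕ × ℕ) : ℝ :=
  c p.1 * Ring.choose ((p.1 + a + 1) + p.2 - 1) p.2 * z ^ (p.1 + p.2)

variable {c : ℕ → ℝ} {a z : ℝ}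

theorem hasSum_eulerTerm_row (hz : |z| < 1) (k : ℕ) :
    HasSum (fun m => eulerTerm c a z (k, m))
      ((1 - z) ^ (-(a + 1)) * (c k * (z / (1 - z)) ^ k)) := by
  have h1z : 0 < 1 - z := by linarith [le_abs_self z]
  have hval : (1 - z) ^ (-(a + 1)) * (c k * (z / (1 - z)) ^ k) =
      c k * (z ^ k * (1 - z) ^ (-(k + (a + 1)))) := by
    rw [Real.pow_mul_rpow_neg_natCast_add h1z]
    ring
  have hterm : (fun m => eulerTerm c a z (k, m)) =
      fun m : ℕ => c k * z ^ k * (Ring.choose ((k + a + 1) + m - 1) m * z ^ m) := by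
    ext m
    simp only [eulerTerm, pow_add]
    ring
  rw [hval, hterm, ← add_assoc, ← mul_assoc]
  exact (hasSum_ringChoose_mul_pow (k + a + 1) hz).mul_left (c k * z ^ k)

theorem summable_eulerTerm (hz : |z| < 1)
    (hc : Summable fun k => |c k| * (|z| / (1 - |z|)) ^ k) :
    Summable (eulerTerm c a z) := by
  have hbound : ∀ p, ‖eulerTerm c a z p‖ ≤ eulerTerm (|c ·|) |a| |z| p := fun ⟨k, m⟩ => by
    have hb : |(k : ℝ) + a + 1| ≤ k + |a| + 1 :=
      abs_le.2 ⟨by linarith [neg_abs_le a, k.cast_nonneg (α := ℝ)], by linarith [le_abs_self a]⟩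
    simp only [eulerTerm]
    rw [Real.norm_eq_abs, abs_mul, abs_mul, abs_pow]
    gcongr
    exact abs_ringChoose_add_natCast_sub_one_le hb m
  have habs : Summable (eulerTerm (|c ·|) |a| |z|) := by
    refine (summable_prod_of_nonneg fun p => (norm_nonneg _).trans (hbound p)).2
      ⟨fun k => (hasSum_eulerTerm_row (by rwa [abs_abs]) k).summable, ?_⟩
    have hrow := hasSum_eulerTerm_row (c := (|c ·|)) (a := |a|) (by rwa [abs_abs])
    simp_rw [fun k => (hrow k).tsum_eq]
    exact hc.mul_left _
  exact habs.of_norm_bounded hbound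

end EulerTransform

theorem hasSum_eulerTransform {c : ℕ → ℝ} (a : ℝ) {z : ℝ} (hz : |z| < 1)
    (hc : Summable fun k => |c k| * (|z| / (1 - |z|)) ^ k) :
    HasSum (fun n : ℕ => (∑ k ∈ range (n + 1), c k * Ring.choose (n + a) (n - k)) * z ^ n)
      ((1 - z) ^ (-(a + 1)) * ∑' k, c k * (z / (1 - z)) ^ k) := by
  have hF := (summable_eulerTerm (a := a) hz hc).hasSum
  rw [← tsum_mul_left, (hF.prod_fiberwise (hasSum_eulerTerm_row hz)).tsum_eq]
  convert hF.sum_antidiagonal using 1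
  ext n
  rw [Nat.sum_antidiagonal_eq_sum_range_succ_mk, sum_mul]
  refine sum_congr rfl fun k hk => ?_
  have hkn : k ≤ n := Nat.lt_succ_iff.1 (mem_range.1 hk)
  simp only [eulerTerm]
  rw [Nat.cast_sub hkn, Nat.add_sub_cancel' hkn]
  ring_nf

theorem genBinom_eq_ringChoose {α : ℚ} (hα : ∀ m : ℕ, α ≠ -(m : ℚ)) {n k : ℕ} (hk : k ≤ n) :
    genBinom α n k = Ring.choose ((n : ℝ) + α) (n - k) := by
  rw [genBinom]
  set x : ℝ := k + α + 1
  have hx : ∀ m : ℕ, x ≠ -m := fun m h => hα (k + 1 + m) <| by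
    push_cast
    exact_mod_cast (by linarith : (α : ℝ) = -(k + 1 + m))
  have hn : (n : ℝ) + α + 1 = x + (n - k : ℕ) := by rw [Nat.cast_sub hk]; ring
  have hchoose : (n : ℝ) + α = x + (n - k : ℕ) - 1 := by linarith
  rw [hn, Real.Gamma_add_natCast_eq_ascPochhammer_mul hx, hchoose,
    Ring.choose_add_natCast_sub_one_eq_ascPochhammer]
  have := Real.Gamma_ne_zero hx
  field_simp

theorem summable_abs_neg_one_pow_div_factorial_mul_add_mul_pow (a t : ℝ) :
    Summable fun k : ℕ => |(-1 : ℝ) ^ k / (k.factorial * (k + a))| * t ^ k := by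
  refine (Real.summable_pow_div_factorial |t|).of_norm_bounded_eventually_nat ?_
  filter_upwards [tendsto_natCast_atTop_atTop.eventually_ge_atTop (|a| + 1)] with k hk
  have hka : 1 ≤ |(k : ℝ) + a| := le_abs.2 (Or.inl (by linarith [neg_abs_le a]))
  rw [Real.norm_eq_abs, abs_mul, abs_abs, abs_pow, abs_div, abs_pow, abs_neg, abs_one, one_pow,
    abs_mul, Nat.abs_cast, div_mul_eq_mul_div, one_mul]
  gcongr
  exact le_mul_of_one_le_right (by positivity) hka

/-- For `α ∈ ℚ` not a nonpositive integer and real `|z| < 1`, the series `∑ P_n(α) zⁿ`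
converges and equals `(1−z)^{−α−1} E_α(−z/(1−z))`, with `E_α(w) = ∑_k w^k/(k!(k+α))`. -/
theorem gammaApprox_generating_function (α : ℚ) (hα : ∀ m : ℕ, α ≠ -(m : ℚ))
    (z : ℝ) (hz : |z| < 1) :
    HasSum (fun n : ℕ => gammaApprox α n * z ^ n)
      ((1 - z) ^ (-(α : ℝ) - 1) *
        ∑' k : ℕ, (-z / (1 - z)) ^ k / ((Nat.factorial k : ℝ) * ((k : ℝ) + (α : ℝ)))) := by
  set c : ℕ → ℝ := fun k => (-1) ^ k / (k.factorial * (k + α))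
  have hP : ∀ n,
      gammaApprox α n = ∑ k ∈ range (n + 1), c k * Ring.choose ((n : ℝ) + α) (n - k) :=
    fun n => sum_congr rfl fun k hk => by
      rw [genBinom_eq_ringChoose hα (Nat.lt_succ_iff.1 (mem_range.1 hk))]
      ring
  have hE : ∑' k : ℕ, (-z / (1 - z)) ^ k / ((k.factorial : ℝ) * (k + α)) =
      ∑' k, c k * (z / (1 - z)) ^ k :=
    tsum_congr fun k => by rw [neg_div, neg_pow]; ring
  rw [hE, ← neg_add']
  simp only [hP]
  exact hasSum_eulerTransform α hz
    (summable_abs_neg_one_pow_div_factorial_mul_add_mul_pow α (|z| / (1 - |z|)))
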